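/- Under Assumptions Q1, A1-i and A1-ii: (a) for each a ∈ 𝒜 the function π ↦ h_{a*}[π] is lower semicontinuous on ℝ^𝒜; (b) h_{a*}[π] ≤ 0 for every a ∈ 𝒜 and π ∈ ℝ^𝒜; (c) h_{a*}[π] = 0 if and only if π_a = max_{b∈𝒜} π_b. -/

import Mathlib

open MeasureTheory Finset
open scoped Classical

/-- The maximal payoff among actions in `S`. -/
noncomputable def piStar {A : Type*} (π : A → ℝ) (S : Finset A) : ℝ :=
  if h : S.Nonempty then S.sup' h π else 0

/-- `Q(q) = μ_Q((-∞, q])`. -/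
noncomputable def Qfun (μQ : Measure ℝ) (q : ℝ) : ℝ := (μQ (Set.Iic q)).toReal

/-- The individual ex-ante first-order net gain `g_{a*}[π]`. -/
noncomputable def gain {A : Type*} [Fintype A] [DecidableEq A]
    (P : A → Finset A → ℝ) (μQ : Measure ℝ) (π : A → ℝ) (a : A) : ℝ :=
  ∑ A' ∈ (Finset.univ.erase a).powerset,
    P a A' * ∫ q, max (piStar π A' - π a - q) 0 ∂μQ

/-- `g_{**}[π](S) = min_{b ∈ S} g_{b*}[π]`. -/
noncomputable def gainMin {A : Type*} [Fintype A] [DecidableEq A]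
    (P : A → Finset A → ℝ) (μQ : Measure ℝ) (π : A → ℝ) (S : Finset A) : ℝ :=
  if h : S.Nonempty then S.inf' h (fun b => gain P μQ π b) else 0

/-- The individual ex-ante second-order net gain `h_{a*}[π]`. -/
noncomputable def gain2 {A : Type*} [Fintype A] [DecidableEq A]
    (P : A → Finset A → ℝ) (μQ : Measure ℝ) (π : A → ℝ) (a : A) : ℝ :=
  ∑ A' ∈ (Finset.univ.erase a).powerset,
    P a A' * Qfun μQ (piStar π A' - π a) * (gainMin P μQ π A' - gain P μQ π a)

/-!
Under Q1 the measure `μ_Q` lives on `[0, ∞)`, so `g_{a*}` is continuous in `π`, vanishes when `a`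
is optimal and, by A1-i, is positive otherwise. Comparing the layer-cake representations of
`g_{a*}` and `g_{b*}`, A1-ii shows that `g_{b*} ≤ g_{a*}` whenever `π_a ≤ π_b`. Now
`Q(π_*(A') - π_a)` vanishes unless `A'` contains an action paid at least `π_a`, whose gain, and
hence `g_{**}(A')`, is at most `g_{a*}`; so every summand of `h_{a*}` is `Q(π_*(A') - π_a)` times
a continuous nonpositive function, which makes it nonpositive and lower semicontinuous (`Q` is
upper semicontinuous, being a right-continuous monotone function). If `a` is not optimal, A1-i
provides a menu of positive probability containing an optimal action `c`, and its summand is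
negative because `g_{c*} = 0 < g_{a*}`.
-/

section CallIntegral

variable {μ : Measure ℝ}

lemma ae_nonneg_of_measure_Iic_eq_zero (h : ∀ q < 0, μ (Set.Iic q) = 0) : ∀ᵐ q ∂μ, 0 ≤ q := by
  have hpos : ∀ n : ℕ, -(1 / ((n : ℝ) + 1)) < 0 := fun n => neg_neg_of_pos Nat.one_div_pos_of_nat
  have hIio : ⋃ n : ℕ, Set.Iic (-(1 / ((n : ℝ) + 1))) = Set.Iio 0 :=
    iUnion_Iic_eq_Iio_of_lt_of_tendsto hpos
      (neg_zero (G := ℝ) ▸ tendsto_one_div_add_atTop_nhds_zero_nat.neg)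
  have : μ (Set.Iio 0) = 0 := hIio ▸ measure_iUnion_null fun n => h _ (hpos n)
  simpa only [ae_iff, not_le, Set.Iio_def] using this

lemma integral_max_sub_zero_eq_zero (hμ : ∀ᵐ q ∂μ, 0 ≤ q) {x : ℝ} (hx : x ≤ 0) :
    ∫ q, max (x - q) 0 ∂μ = 0 := by
  refine integral_eq_zero_of_ae ?_
  filter_upwards [hμ] with q hq
  exact max_eq_right (by linarith)

variable [IsFiniteMeasure μ]

lemma ae_nonneg_of_Qfun_eq_zero (h : ∀ q < 0, Qfun μ q = 0) : ∀ᵐ q ∂μ, 0 ≤ q :=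
  ae_nonneg_of_measure_Iic_eq_zero fun q hq =>
    ((ENNReal.toReal_eq_zero_iff _).1 (h q hq)).resolve_right (measure_ne_top _ _)

lemma integrable_max_sub_zero (hμ : ∀ᵐ q ∂μ, 0 ≤ q) (x : ℝ) :
    Integrable (fun q => max (x - q) 0) μ := by
  refine (integrable_const (max x 0)).mono' (by fun_prop) ?_
  filter_upwards [hμ] with q hq
  rw [Real.norm_eq_abs, abs_of_nonneg (le_max_right _ _)]
  exact max_le_max (by linarith) le_rfl

lemma integral_max_sub_zero_pos (hμ : ∀ᵐ q ∂μ, 0 ≤ q) {x y : ℝ} (hyx : y < x)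
    (hy : 0 < μ.real (Set.Iic y)) : 0 < ∫ q, max (x - q) 0 ∂μ := by
  have hle : (Set.Iic y).indicator (fun _ => x - y) ≤ fun q => max (x - q) 0 := by
    intro q
    by_cases hq : q ∈ Set.Iic y
    · rw [Set.indicator_of_mem hq]
      exact le_max_of_le_left (by linarith [Set.mem_Iic.1 hq])
    · rw [Set.indicator_of_notMem hq]
      exact le_max_right _ _
  calc 0 < μ.real (Set.Iic y) * (x - y) := mul_pos hy (by linarith)
    _ = ∫ q, (Set.Iic y).indicator (fun _ => x - y) q ∂μ := by
      rw [integral_indicator_const _ measurableSet_Iic, smul_eq_mul]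
    _ ≤ ∫ q, max (x - q) 0 ∂μ :=
      integral_mono ((integrable_const _).indicator measurableSet_Iic)
        (integrable_max_sub_zero hμ x) hle

lemma continuous_integral_max_sub_zero (hμ : ∀ᵐ q ∂μ, 0 ≤ q) :
    Continuous fun x => ∫ q, max (x - q) 0 ∂μ := by
  refine (LipschitzWith.of_le_add_mul' (μ.real Set.univ) fun x y => ?_).continuous
  have hpt : ∀ q, max (x - q) 0 ≤ max (y - q) 0 + dist x y := fun q => by
    have := abs_max_sub_max_le_abs (x - q) (y - q) 0
    rw [sub_sub_sub_cancel_right] at this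
    linarith [(abs_le.1 this).2, Real.dist_eq x y]
  calc ∫ q, max (x - q) 0 ∂μ ≤ ∫ q, (max (y - q) 0 + dist x y) ∂μ :=
        integral_mono (integrable_max_sub_zero hμ x)
          ((integrable_max_sub_zero hμ y).add (integrable_const _)) hpt
    _ = ∫ q, max (y - q) 0 ∂μ + μ.real Set.univ * dist x y := by
        rw [integral_add (integrable_max_sub_zero hμ y) (integrable_const _), integral_const,
          smul_eq_mul]

end CallIntegral

lemma max_sub_zero_eq_setIntegral_indicator (z q : ℝ) :
    max (z - q) 0 = ∫ s in Set.Ioi q, (Set.Iio z).indicator 1 s := by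
  rw [setIntegral_indicator measurableSet_Iio, Set.Ioi_inter_Iio, Pi.one_def, setIntegral_const,
    Real.volume_real_Ioo, smul_eq_mul, mul_one]

lemma integrableOn_indicator_Iio_one (q z : ℝ) :
    IntegrableOn ((Set.Iio z).indicator (1 : ℝ → ℝ)) (Set.Ioi q) := by
  rw [IntegrableOn, integrable_indicator_iff measurableSet_Iio, IntegrableOn,
    Measure.restrict_restrict measurableSet_Iio, Set.Iio_inter_Ioi]
  exact integrableOn_const measure_Ioo_lt_top.ne

lemma integrableOn_sum_mul_indicator_Iio {ι : Type*} (s : Finset ι) (w x : ι → ℝ) (q : ℝ) :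
    IntegrableOn (fun r => ∑ i ∈ s, w i * (Set.Iio (x i)).indicator 1 r) (Set.Ioi q) :=
  integrable_finsetSum s fun _ _ => (integrableOn_indicator_Iio_one q _).const_mul _

lemma sum_mul_max_sub_zero_eq_setIntegral {ι : Type*} (s : Finset ι) (w x : ι → ℝ) (q : ℝ) :
    ∑ i ∈ s, w i * max (x i - q) 0
      = ∫ r in Set.Ioi q, ∑ i ∈ s, w i * (Set.Iio (x i)).indicator 1 r := by
  rw [integral_finsetSum _ fun i _ => (integrableOn_indicator_Iio_one q _).const_mul _]
  simp only [integral_const_mul, max_sub_zero_eq_setIntegral_indicator]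

/-- First-order stochastic dominance of two finite weighted families above `q` implies dominance
of their expected excesses over `q`. -/
lemma sum_mul_max_sub_zero_le {ι κ : Type*} (s : Finset ι) (t : Finset κ)
    (w x : ι → ℝ) (w' y : κ → ℝ) (q : ℝ)
    (h : ∀ r, q < r → ∑ i ∈ s with r < x i, w i ≤ ∑ j ∈ t with r < y j, w' j) :
    ∑ i ∈ s, w i * max (x i - q) 0 ≤ ∑ j ∈ t, w' j * max (y j - q) 0 := by
  rw [sum_mul_max_sub_zero_eq_setIntegral, sum_mul_max_sub_zero_eq_setIntegral]
  refine setIntegral_mono_on (integrableOn_sum_mul_indicator_Iio _ _ _ q)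
    (integrableOn_sum_mul_indicator_Iio _ _ _ q) measurableSet_Ioi fun r hr => ?_
  simpa only [sum_filter, Set.indicator_apply, Set.mem_Iio, Pi.one_apply, mul_ite, mul_one,
    mul_zero] using h r hr

lemma Monotone.upperSemicontinuous_of_continuousWithinAt_Ici {α β : Type*} [TopologicalSpace α]
    [LinearOrder α] [LinearOrder β] [TopologicalSpace β] [ClosedIciTopology β] {f : α → β}
    (hf : Monotone f)
    (hright : ∀ x, ContinuousWithinAt f (Set.Ici x) x) : UpperSemicontinuous f := by
  intro x₀ y hy
  have hev := eventually_nhdsWithin_iff.1 ((hright x₀).eventually_lt_const hy)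
  filter_upwards [hev] with x hx
  rcases le_or_gt x₀ x with h | h
  · exact hx h
  · exact (hf h.le).trans_lt hy

lemma upperSemicontinuous_Qfun (μ : Measure ℝ) [IsProbabilityMeasure μ] :
    UpperSemicontinuous (Qfun μ) := by
  have hcdf : Qfun μ = ProbabilityTheory.cdf μ := by
    funext x
    rw [ProbabilityTheory.cdf_eq_real, Qfun, measureReal_def]
  rw [hcdf]
  exact (ProbabilityTheory.cdf μ).mono.upperSemicontinuous_of_continuousWithinAt_Ici
    (ProbabilityTheory.cdf μ).right_continuous

lemma UpperSemicontinuous.lowerSemicontinuous_mul_of_nonpos {X : Type*} [TopologicalSpace X]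
    {f g : X → ℝ} (hf : UpperSemicontinuous f) (hg : Continuous g) (hg0 : ∀ x, g x ≤ 0) :
    LowerSemicontinuous fun x => f x * g x := by
  intro x₀ y hy
  -- `max (f x) (f x₀)` tends to `f x₀` and bounds `f x` from above, which suffices as `g ≤ 0`.
  have hmax : Filter.Tendsto (fun x => max (f x) (f x₀)) (nhds x₀) (nhds (f x₀)) := by
    refine tendsto_order.2 ⟨fun b hb => Filter.Eventually.of_forall fun x =>
      hb.trans_le (le_max_right _ _), fun b hb => ?_⟩
    filter_upwards [hf x₀ b hb] with x hx
    exact max_lt hx hb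
  have hprod := (hmax.mul (hg.tendsto x₀)).eventually (eventually_gt_nhds hy)
  filter_upwards [hprod] with x hx
  exact hx.trans_le (mul_le_mul_of_nonpos_right (le_max_left _ _) (hg0 x))

section Model

variable {A : Type*} {π : A → ℝ}

lemma le_piStar_iff {S : Finset A} (hS : S.Nonempty) {x : ℝ} :
    x ≤ piStar π S ↔ ∃ d ∈ S, x ≤ π d := by
  rw [piStar, dif_pos hS, le_sup'_iff]

lemma lt_piStar_iff {S : Finset A} (hS : S.Nonempty) {x : ℝ} :
    x < piStar π S ↔ ∃ d ∈ S, x < π d := by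
  rw [piStar, dif_pos hS, lt_sup'_iff]

lemma continuous_piStar (S : Finset A) : Continuous fun π : A → ℝ => piStar π S := by
  rcases S.eq_empty_or_nonempty with rfl | hS
  · simp only [piStar, Finset.not_nonempty_empty, dite_false]
    exact continuous_const
  · simp only [piStar, dif_pos hS]
    exact Continuous.finset_sup'_apply hS fun d _ => continuous_apply d

variable [Fintype A] [DecidableEq A] {P : A → Finset A → ℝ} {μQ : Measure ℝ}

def AssumptionA1i (P : A → Finset A → ℝ) : Prop :=
  ∀ a b : A, b ≠ a →
    0 < ∑ A' ∈ (Finset.univ.erase a).powerset.filter (fun A' => b ∈ A'), P a A'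

def AssumptionA1ii (P : A → Finset A → ℝ) : Prop :=
  ∀ a b : A, ∀ S : Finset A, S ⊆ Finset.univ \ {a, b} →
    ∑ A' ∈ (Finset.univ.erase a).powerset.filter (fun A' => (A' ∩ S).Nonempty), P a A'
      = ∑ A' ∈ (Finset.univ.erase b).powerset.filter (fun A' => (A' ∩ S).Nonempty), P b A'

lemma sum_filter_lt_piStar_sub_eq (hPempty : ∀ a, P a ∅ = 0) (c : A) (r : ℝ) :
    ∑ A' ∈ (univ.erase c).powerset with r < piStar π A' - π c, P c A'
      = ∑ A' ∈ (univ.erase c).powerset with (A' ∩ univ.filter (π c + r < π ·)).Nonempty,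
          P c A' := by
  rw [sum_filter, sum_filter]
  refine sum_congr rfl fun A' _ => ?_
  rcases A'.eq_empty_or_nonempty with rfl | hA'
  · simp [hPempty]
  · refine if_congr ?_ rfl rfl
    rw [lt_sub_iff_add_lt', lt_piStar_iff hA']
    simp only [Finset.Nonempty, mem_inter, mem_filter, mem_univ, true_and]

/-- The menus on which `b` gains more than `r` are those meeting `{d | π b + r < π d}`, a set
avoiding `a` and `b`; A1-ii gives `a` the same weight on them, and for `a` the set only grows. -/
lemma sum_filter_lt_piStar_sub_le (hPnn : ∀ a A', 0 ≤ P a A') (hPempty : ∀ a, P a ∅ = 0)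
    (hA1ii : AssumptionA1ii P) {a b : A} (hab : π a ≤ π b) {r : ℝ} (hr : 0 ≤ r) :
    ∑ A' ∈ (univ.erase b).powerset with r < piStar π A' - π b, P b A'
      ≤ ∑ A' ∈ (univ.erase a).powerset with r < piStar π A' - π a, P a A' := by
  have hsub : univ.filter (π b + r < π ·) ⊆ univ \ {a, b} := by
    intro d hd
    simp only [mem_filter, mem_univ, true_and] at hd
    simp only [mem_sdiff, mem_univ, mem_insert, mem_singleton, true_and]
    rintro (rfl | rfl) <;> linarith
  rw [sum_filter_lt_piStar_sub_eq hPempty, sum_filter_lt_piStar_sub_eq hPempty, ← hA1ii a b _ hsub]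
  refine sum_le_sum_of_subset_of_nonneg (monotone_filter_right _ fun A' _ hA' => ?_)
    fun _ _ _ => hPnn _ _
  refine hA'.mono (inter_subset_inter_left (monotone_filter_right _ fun d _ hd => ?_))
  linarith

lemma gain_eq_integral_sum [IsFiniteMeasure μQ] (hμ : ∀ᵐ q ∂μQ, 0 ≤ q) (c : A) :
    gain P μQ π c = ∫ q, ∑ A' ∈ (univ.erase c).powerset,
      P c A' * max (piStar π A' - π c - q) 0 ∂μQ := by
  rw [integral_finsetSum _ fun A' _ => (integrable_max_sub_zero hμ _).const_mul _]
  simp only [gain, integral_const_mul]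

lemma gain_le_gain_of_le [IsFiniteMeasure μQ] (hμ : ∀ᵐ q ∂μQ, 0 ≤ q)
    (hPnn : ∀ a A', 0 ≤ P a A') (hPempty : ∀ a, P a ∅ = 0) (hA1ii : AssumptionA1ii P)
    {a b : A} (hab : π a ≤ π b) : gain P μQ π b ≤ gain P μQ π a := by
  rw [gain_eq_integral_sum hμ, gain_eq_integral_sum hμ]
  refine integral_mono_ae (integrable_finsetSum _ fun A' _ =>
    (integrable_max_sub_zero hμ _).const_mul _) (integrable_finsetSum _ fun A' _ =>
    (integrable_max_sub_zero hμ _).const_mul _) ?_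
  filter_upwards [hμ] with q hq
  exact sum_mul_max_sub_zero_le _ _ _ _ _ _ q fun r hr =>
    sum_filter_lt_piStar_sub_le hPnn hPempty hA1ii hab (by linarith)

lemma gain_nonneg (hPnn : ∀ a A', 0 ≤ P a A') (c : A) : 0 ≤ gain P μQ π c :=
  sum_nonneg fun _ _ => mul_nonneg (hPnn _ _) (integral_nonneg fun _ => le_max_right _ _)

lemma gain_eq_zero_of_forall_le (hμ : ∀ᵐ q ∂μQ, 0 ≤ q) (hPempty : ∀ a, P a ∅ = 0) {c : A}
    (hc : ∀ d, π d ≤ π c) : gain P μQ π c = 0 := by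
  refine sum_eq_zero fun A' _ => ?_
  rcases A'.eq_empty_or_nonempty with rfl | hA'
  · rw [hPempty, zero_mul]
  · have hle : piStar π A' ≤ π c := by
      rw [piStar, dif_pos hA']
      exact sup'_le hA' π fun d _ => hc d
    rw [integral_max_sub_zero_eq_zero hμ (by linarith), mul_zero]

lemma exists_menu_mem_weight_pos (hA1i : AssumptionA1i P) {a b : A} (hba : b ≠ a) :
    ∃ A₀ ∈ (univ.erase a).powerset, b ∈ A₀ ∧ 0 < P a A₀ := by
  obtain ⟨A₀, hA₀, hpos⟩ := exists_lt_of_sum_lt (f := fun _ => (0 : ℝ))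
    (by simpa only [sum_const_zero] using hA1i a b hba)
  rw [mem_filter] at hA₀
  exact ⟨A₀, hA₀.1, hA₀.2, hpos⟩

lemma gain_pos_of_lt [IsFiniteMeasure μQ] (hμ : ∀ᵐ q ∂μQ, 0 ≤ q)
    (hQ1b : ∀ q : ℝ, 0 < q → 0 < Qfun μQ q) (hPnn : ∀ a A', 0 ≤ P a A')
    (hA1i : AssumptionA1i P) {a b : A} (hab : π a < π b) : 0 < gain P μQ π a := by
  obtain ⟨A₀, hA₀, hbA₀, hpos⟩ := exists_menu_mem_weight_pos hA1i (ne_of_apply_ne π hab.ne')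
  have hlt : π a < piStar π A₀ := (lt_piStar_iff ⟨b, hbA₀⟩).2 ⟨b, hbA₀, hab⟩
  have hint : 0 < ∫ q, max (piStar π A₀ - π a - q) 0 ∂μQ :=
    integral_max_sub_zero_pos hμ (half_lt_self (by linarith)) (hQ1b _ (by linarith))
  exact (mul_pos hpos hint).trans_le <| single_le_sum (f := fun A' =>
    P a A' * ∫ q, max (piStar π A' - π a - q) 0 ∂μQ)
    (fun _ _ => mul_nonneg (hPnn _ _) (integral_nonneg fun _ => le_max_right _ _)) hA₀

lemma continuous_gain [IsFiniteMeasure μQ] (hμ : ∀ᵐ q ∂μQ, 0 ≤ q) (c : A) :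
    Continuous fun π : A → ℝ => gain P μQ π c :=
  continuous_finsetSum _ fun A' _ => continuous_const.mul <|
    (continuous_integral_max_sub_zero hμ).comp ((continuous_piStar A').sub (continuous_apply c))

lemma continuous_gainMin [IsFiniteMeasure μQ] (hμ : ∀ᵐ q ∂μQ, 0 ≤ q) (S : Finset A) :
    Continuous fun π : A → ℝ => gainMin P μQ π S := by
  rcases S.eq_empty_or_nonempty with rfl | hS
  · simp only [gainMin, Finset.not_nonempty_empty, dite_false]
    exact continuous_const
  · simp only [gainMin, dif_pos hS]
    exact Continuous.finset_inf'_apply hS fun b _ => continuous_gain hμ b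

lemma gainMin_nonneg (hPnn : ∀ a A', 0 ≤ P a A') (S : Finset A) : 0 ≤ gainMin P μQ π S := by
  rw [gainMin]
  split_ifs with hS
  · exact le_inf' hS _ fun b _ => gain_nonneg hPnn b
  · exact le_rfl

lemma gainMin_le_gain {S : Finset A} {b : A} (hb : b ∈ S) :
    gainMin P μQ π S ≤ gain P μQ π b := by
  rw [gainMin, dif_pos ⟨b, hb⟩]
  exact inf'_le _ hb

noncomputable def gain2Term (P : A → Finset A → ℝ) (μQ : Measure ℝ) (π : A → ℝ) (a : A)
    (A' : Finset A) : ℝ :=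
  P a A' * Qfun μQ (piStar π A' - π a) * (gainMin P μQ π A' - gain P μQ π a)

lemma gain2_eq_sum_gain2Term (a : A) :
    gain2 P μQ π a = ∑ A' ∈ (univ.erase a).powerset, gain2Term P μQ π a A' := rfl

/-- The factor `Q(π_*(A') - π_a)` vanishes unless some action of `A'` is paid at least `π_a`,
and such an action has a smaller first-order gain than `a`. -/
lemma gain2Term_eq_mul_min [IsFiniteMeasure μQ] (hμ : ∀ᵐ q ∂μQ, 0 ≤ q)
    (hQ1a : ∀ q : ℝ, q < 0 → Qfun μQ q = 0) (hPnn : ∀ a A', 0 ≤ P a A')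
    (hPempty : ∀ a, P a ∅ = 0) (hA1ii : AssumptionA1ii P) (a : A) (A' : Finset A) :
    gain2Term P μQ π a A' = P a A' * Qfun μQ (piStar π A' - π a)
      * min (gainMin P μQ π A' - gain P μQ π a) 0 := by
  rw [gain2Term]
  by_cases hQ : Qfun μQ (piStar π A' - π a) = 0
  · rw [hQ, mul_zero, zero_mul, zero_mul]
  suffices gainMin P μQ π A' ≤ gain P μQ π a by rw [min_eq_left (by linarith)]
  rcases A'.eq_empty_or_nonempty with rfl | hA'
  · rw [gainMin, dif_neg Finset.not_nonempty_empty]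
    exact gain_nonneg hPnn a
  have hle : π a ≤ piStar π A' := not_lt.1 fun h => hQ (hQ1a _ (sub_neg.2 h))
  obtain ⟨d, hd, hda⟩ := (le_piStar_iff hA').1 hle
  exact (gainMin_le_gain hd).trans (gain_le_gain_of_le hμ hPnn hPempty hA1ii hda)

lemma gain2Term_nonpos [IsFiniteMeasure μQ] (hμ : ∀ᵐ q ∂μQ, 0 ≤ q)
    (hQ1a : ∀ q : ℝ, q < 0 → Qfun μQ q = 0) (hPnn : ∀ a A', 0 ≤ P a A')
    (hPempty : ∀ a, P a ∅ = 0) (hA1ii : AssumptionA1ii P) (a : A) (A' : Finset A) :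
    gain2Term P μQ π a A' ≤ 0 := by
  rw [gain2Term_eq_mul_min hμ hQ1a hPnn hPempty hA1ii]
  exact mul_nonpos_of_nonneg_of_nonpos (mul_nonneg (hPnn a A') ENNReal.toReal_nonneg)
    (min_le_right _ _)

lemma lowerSemicontinuous_gain2Term [IsProbabilityMeasure μQ] (hμ : ∀ᵐ q ∂μQ, 0 ≤ q)
    (hQ1a : ∀ q : ℝ, q < 0 → Qfun μQ q = 0) (hPnn : ∀ a A', 0 ≤ P a A')
    (hPempty : ∀ a, P a ∅ = 0) (hA1ii : AssumptionA1ii P) (a : A) (A' : Finset A) :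
    LowerSemicontinuous fun π => gain2Term P μQ π a A' := by
  have hQ : UpperSemicontinuous fun π : A → ℝ => Qfun μQ (piStar π A' - π a) :=
    (upperSemicontinuous_Qfun μQ).comp ((continuous_piStar A').sub (continuous_apply a))
  have hw : Continuous fun π : A → ℝ =>
      P a A' * min (gainMin P μQ π A' - gain P μQ π a) 0 :=
    continuous_const.mul
      (((continuous_gainMin hμ A').sub (continuous_gain hμ a)).min continuous_const)
  convert hQ.lowerSemicontinuous_mul_of_nonpos hw
    (fun π => mul_nonpos_of_nonneg_of_nonpos (hPnn a A') (min_le_right _ _)) using 2 with π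
  rw [gain2Term_eq_mul_min hμ hQ1a hPnn hPempty hA1ii]
  ring

lemma gain2_eq_zero_of_forall_le [IsFiniteMeasure μQ] (hμ : ∀ᵐ q ∂μQ, 0 ≤ q)
    (hQ1a : ∀ q : ℝ, q < 0 → Qfun μQ q = 0) (hPnn : ∀ a A', 0 ≤ P a A')
    (hPempty : ∀ a, P a ∅ = 0) (hA1ii : AssumptionA1ii P) {a : A} (ha : ∀ d, π d ≤ π a) :
    gain2 P μQ π a = 0 := by
  rw [gain2_eq_sum_gain2Term]
  refine sum_eq_zero fun A' _ => ?_
  rw [gain2Term_eq_mul_min hμ hQ1a hPnn hPempty hA1ii, gain_eq_zero_of_forall_le hμ hPempty ha,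
    sub_zero, min_eq_right (gainMin_nonneg hPnn A'), mul_zero]

lemma gain2_neg_of_lt [IsFiniteMeasure μQ] (hμ : ∀ᵐ q ∂μQ, 0 ≤ q)
    (hQ1a : ∀ q : ℝ, q < 0 → Qfun μQ q = 0) (hQ1b : ∀ q : ℝ, 0 < q → 0 < Qfun μQ q)
    (hPnn : ∀ a A', 0 ≤ P a A') (hPempty : ∀ a, P a ∅ = 0)
    (hA1i : AssumptionA1i P) (hA1ii : AssumptionA1ii P) {a b : A} (hab : π a < π b) :
    gain2 P μQ π a < 0 := by
  obtain ⟨c, -, hc⟩ := exists_max_image univ π ⟨a, mem_univ a⟩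
  have hac : π a < π c := hab.trans_le (hc b (mem_univ b))
  obtain ⟨A₀, hA₀, hcA₀, hpos⟩ := exists_menu_mem_weight_pos hA1i (ne_of_apply_ne π hac.ne')
  have hQ : 0 < Qfun μQ (piStar π A₀ - π a) :=
    hQ1b _ (sub_pos.2 ((lt_piStar_iff ⟨c, hcA₀⟩).2 ⟨c, hcA₀, hac⟩))
  have hgain : gainMin P μQ π A₀ < gain P μQ π a :=
    calc gainMin P μQ π A₀ ≤ gain P μQ π c := gainMin_le_gain hcA₀
      _ = 0 := gain_eq_zero_of_forall_le hμ hPempty fun d => hc d (mem_univ d)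
      _ < gain P μQ π a := gain_pos_of_lt hμ hQ1b hPnn hA1i hac
  have hterm : gain2Term P μQ π a A₀ < 0 :=
    mul_neg_of_pos_of_neg (mul_pos hpos hQ) (sub_neg.2 hgain)
  rw [gain2_eq_sum_gain2Term]
  simpa only [sum_const_zero] using sum_lt_sum (g := fun _ => (0 : ℝ))
    (fun A' _ => gain2Term_nonpos hμ hQ1a hPnn hPempty hA1ii a A') ⟨A₀, hA₀, hterm⟩

end Model

theorem stmt4_general {A : Type*} [Fintype A] [DecidableEq A] [Nonempty A]
    (P : A → Finset A → ℝ) (μQ : Measure ℝ) [IsProbabilityMeasure μQ]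
    (hPnn : ∀ a A', 0 ≤ P a A')
    (hPempty : ∀ a, P a (∅ : Finset A) = 0)
    -- Assumption Q1
    (hQ1a : ∀ q : ℝ, q < 0 → Qfun μQ q = 0)
    (hQ1b : ∀ q : ℝ, 0 < q → 0 < Qfun μQ q)
    -- Assumption A1-i
    (hA1i : ∀ a b : A, b ≠ a →
      0 < ∑ A' ∈ (Finset.univ.erase a).powerset.filter (fun A' => b ∈ A'), P a A')
    -- Assumption A1-ii
    (hA1ii : ∀ a b : A, ∀ S : Finset A, S ⊆ Finset.univ \ {a, b} →
      ∑ A' ∈ (Finset.univ.erase a).powerset.filter (fun A' => (A' ∩ S).Nonempty), P a A'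
        = ∑ A' ∈ (Finset.univ.erase b).powerset.filter (fun A' => (A' ∩ S).Nonempty), P b A')
    (a : A) :
    LowerSemicontinuous (fun π : A → ℝ => gain2 P μQ π a) ∧
      (∀ π : A → ℝ, gain2 P μQ π a ≤ 0) ∧
      (∀ π : A → ℝ,
        (gain2 P μQ π a = 0 ↔ π a = Finset.univ.sup' Finset.univ_nonempty π)) := by
  have hμ : ∀ᵐ q ∂μQ, 0 ≤ q := ae_nonneg_of_Qfun_eq_zero hQ1a
  refine ⟨lowerSemicontinuous_sum fun A' _ =>
      lowerSemicontinuous_gain2Term hμ hQ1a hPnn hPempty hA1ii a A',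
    fun π => sum_nonpos fun A' _ => gain2Term_nonpos hμ hQ1a hPnn hPempty hA1ii a A',
    fun π => ?_⟩
  have hmax : π a = univ.sup' univ_nonempty π ↔ ∀ d, π d ≤ π a := by
    rw [le_antisymm_iff, and_iff_right (le_sup' π (mem_univ a)), sup'_le_iff]
    simp only [mem_univ, true_implies]
  rw [hmax]
  refine ⟨fun h => ?_, gain2_eq_zero_of_forall_le hμ hQ1a hPnn hPempty hA1ii⟩
  by_contra hnot
  obtain ⟨b, hab⟩ := not_forall.1 hnot
  exact (gain2_neg_of_lt hμ hQ1a hQ1b hPnn hPempty hA1i hA1ii (not_le.1 hab)).ne h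

theorem stmt4 {A : Type*} [Fintype A] [DecidableEq A] [Nonempty A]
    (P : A → Finset A → ℝ) (μQ : Measure ℝ) [IsProbabilityMeasure μQ]
    (hPnn : ∀ a A', 0 ≤ P a A')
    (hPsupp : ∀ a A', ¬ A' ⊆ Finset.univ.erase a → P a A' = 0)
    (hPempty : ∀ a, P a (∅ : Finset A) = 0)
    (hPsum : ∀ a, ∑ A' ∈ (Finset.univ.erase a).powerset, P a A' = 1)
    -- Assumption Q1
    (hQ1a : ∀ q : ℝ, q < 0 → Qfun μQ q = 0)
    (hQ1b : ∀ q : ℝ, 0 < q → 0 < Qfun μQ q)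
    -- Assumption A1-i
    (hA1i : ∀ a b : A, b ≠ a →
      0 < ∑ A' ∈ (Finset.univ.erase a).powerset.filter (fun A' => b ∈ A'), P a A')
    -- Assumption A1-ii
    (hA1ii : ∀ a b : A, ∀ S : Finset A, S ⊆ Finset.univ \ {a, b} →
      ∑ A' ∈ (Finset.univ.erase a).powerset.filter (fun A' => (A' ∩ S).Nonempty), P a A'
        = ∑ A' ∈ (Finset.univ.erase b).powerset.filter (fun A' => (A' ∩ S).Nonempty), P b A')
    (a : A) :
    LowerSemicontinuous (fun π : A → ℝ => gain2 P μQ π a) ∧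
      (∀ π : A → ℝ, gain2 P μQ π a ≤ 0) ∧
      (∀ π : A → ℝ,
        (gain2 P μQ π a = 0 ↔ π a = Finset.univ.sup' Finset.univ_nonempty π)) :=
  stmt4_general P μQ hPnn hPempty hQ1a hQ1b hA1i hA1ii a
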